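/- arXiv:2603.21031 — 10 statements merged into one kernel-verified Lean document; each statement's English description precedes it below -/
import Mathlib

section
/- Let N, p be positive integers with d = gcd(N, p) < N, and write p = d p', N = d N' with gcd(p', N') = 1 and N' ≥ 2. Then the set (p p'/N')·(ℤ \ N'ℤ) is contained in (p/N)·(ℤ \ Nℤ). In particular, (p/N')·(ℤ \ N'ℤ) ⊆ (p/N)·(ℤ \ Nℤ). -/
/-- If `d = gcd(N, p) < N`, `p = d p'`, `N = d N'` with `gcd(p', N') = 1` and `N' ≥ 2`, then
`(p p'/N')·(ℤ \ N'ℤ) ⊆ (p/N)·(ℤ \ Nℤ)`, and in particular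
`(p/N')·(ℤ \ N'ℤ) ⊆ (p/N)·(ℤ \ Nℤ)` (as subsets of `ℝ`). -/
theorem zero_set_inclusion (N p d p' N' : ℕ) (hN : 0 < N) (hp : 0 < p)
    (hd : d = Nat.gcd N p) (hdN : d < N) (hp' : p = d * p') (hN' : N = d * N')
    (hcop : Nat.gcd p' N' = 1) (hN'2 : 2 ≤ N') :
    ({x : ℝ | ∃ a : ℤ, ¬ ((N' : ℤ) ∣ a) ∧ x = ((p : ℝ) * p' / N') * a}
        ⊆ {x : ℝ | ∃ b : ℤ, ¬ ((N : ℤ) ∣ b) ∧ x = ((p : ℝ) / N) * b}) ∧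
    ({x : ℝ | ∃ a : ℤ, ¬ ((N' : ℤ) ∣ a) ∧ x = ((p : ℝ) / N') * a}
        ⊆ {x : ℝ | ∃ b : ℤ, ¬ ((N : ℤ) ∣ b) ∧ x = ((p : ℝ) / N) * b}) := by
  have hd0 : 0 < d := by
    rcases Nat.eq_zero_or_pos d with h | h
    · exfalso; subst h; simp at hp'; omega
    · exact h
  have hN'0 : 0 < N' := by omega
  have hdR : (d : ℝ) ≠ 0 := Nat.cast_ne_zero.mpr hd0.ne'
  have hN'R : (N' : ℝ) ≠ 0 := Nat.cast_ne_zero.mpr hN'0.ne'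
  have hNR : (N : ℝ) ≠ 0 := Nat.cast_ne_zero.mpr hN.ne'
  have hcopZ : IsCoprime (N' : ℤ) (p' : ℤ) := by
    rw [Int.isCoprime_iff_gcd_eq_one, Int.gcd_natCast_natCast, Nat.gcd_comm]
    exact hcop
  have hNcast : (N : ℝ) = (d : ℝ) * N' := by exact_mod_cast congrArg (Nat.cast : ℕ → ℝ) hN'
  constructor
  · rintro x ⟨a, ha, rfl⟩
    refine ⟨(d : ℤ) * p' * a, ?_, ?_⟩
    · intro hdvd
      apply ha
      rw [hN'] at hdvd
      push_cast at hdvd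
      have h1 : (N' : ℤ) ∣ (p' : ℤ) * a := by
        rcases hdvd with ⟨c, hc⟩
        refine ⟨c, ?_⟩
        have : (d : ℤ) * ((p' : ℤ) * a) = (d : ℤ) * ((N' : ℤ) * c) := by ring_nf; ring_nf at hc; linarith
        exact mul_left_cancel₀ (by exact_mod_cast hd0.ne') this
      exact (hcopZ.dvd_of_dvd_mul_left h1)
    · push_cast [hNcast]
      field_simp
  · rintro x ⟨a, ha, rfl⟩
    refine ⟨(d : ℤ) * a, ?_, ?_⟩
    · intro hdvd
      apply ha
      rw [hN'] at hdvd
      push_cast at hdvd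
      rcases hdvd with ⟨c, hc⟩
      refine ⟨c, ?_⟩
      have : (d : ℤ) * a = (d : ℤ) * ((N' : ℤ) * c) := by linarith [hc]
      exact mul_left_cancel₀ (by exact_mod_cast hd0.ne') this
    · push_cast [hNcast]
      field_simp
end

section
/- Let L = L_1^{α_1} ⋯ L_κ^{α_κ} be the prime factorization of L (distinct primes L_i, α_i ≥ 1), and suppose L divides p, with m = L_1^{τ_1} ⋯ L_κ^{τ_κ} m' and p = L_1^{l_1} ⋯ L_κ^{l_κ} p' where gcd(L_i, m') = gcd(L_i, p') = 1 and l_i ≥ α_i. For each i let d_i ≥ 0 and 0 ≤ r_i < l_i be the unique integers with τ_i + α_i − 1 = d_i l_i + r_i, and set d = max_i d_i. Then d = max{ j ∈ ℕ : gcd( mL / gcd(mL, p^j), L ) ≠ 1 }. -/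
open Finset

lemma fact_eval (κ : ℕ) (Lp e : Fin κ → ℕ) (c : ℕ)
    (hprime : ∀ i, (Lp i).Prime) (hdist : Function.Injective Lp)
    (hc : c ≠ 0) (hcop : ∀ i, Nat.gcd (Lp i) c = 1) (i : Fin κ) :
    ((∏ j, Lp j ^ e j) * c).factorization (Lp i) = e i := by
  have hne : ∀ j : Fin κ, Lp j ^ e j ≠ 0 := fun j => pow_ne_zero _ (hprime j).pos.ne'
  have hprod : (∏ j, Lp j ^ e j) ≠ 0 := Finset.prod_ne_zero_iff.mpr (fun j _ => hne j)
  rw [Nat.factorization_mul hprod hc, Nat.factorization_prod (fun j _ => hne j)]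
  have hcfact : c.factorization (Lp i) = 0 := by
    apply Nat.factorization_eq_zero_of_not_dvd
    intro hd
    have : Lp i = 1 := Nat.eq_one_of_dvd_coprimes (hcop i) dvd_rfl hd
    exact (hprime i).one_lt.ne' this
  simp only [Finsupp.coe_add, Pi.add_apply, hcfact, add_zero,
    Finsupp.finset_sum_apply]
  have : ∀ j : Fin κ, (Lp j ^ e j).factorization (Lp i) = if j = i then e j else 0 := by
    intro j
    rw [Nat.Prime.factorization_pow (hprime j)]
    rcases eq_or_ne j i with rfl | hji
    · simp
    · rw [Finsupp.single_apply, if_neg (fun h => hji (hdist h)), if_neg hji]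
  rw [Finset.sum_congr rfl (fun j _ => this j)]
  simp

lemma tsub_min_pos (A B : ℕ) : 0 < A - min A B ↔ B < A := by omega

/-- Equivalence of the two definitions of the key exponent `d`:
with `L = ∏ L_i^{α_i}`, `m = (∏ L_i^{τ_i}) m'`, `p = (∏ L_i^{l_i}) p'`, `L ∣ p`,
and `τ_i + α_i − 1 = d_i l_i + r_i` (`0 ≤ r_i < l_i`),
the number `d = max_i d_i` equals `max{ j : gcd(mL/gcd(mL, p^j), L) ≠ 1 }`. -/
theorem exponent_d_equivalence (κ : ℕ) (hκ : 0 < κ)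
    (Lp α τ l dd r : Fin κ → ℕ) (L m p m' p' : ℕ)
    (hprime : ∀ i, (Lp i).Prime) (hdist : Function.Injective Lp)
    (hα : ∀ i, 1 ≤ α i) (hl : ∀ i, α i ≤ l i)
    (hL : L = ∏ i, Lp i ^ α i)
    (hm' : 1 ≤ m') (hp' : 1 ≤ p')
    (hm : m = (∏ i, Lp i ^ τ i) * m')
    (hp : p = (∏ i, Lp i ^ l i) * p')
    (hLdvd : L ∣ p)
    (hcopm : ∀ i, Nat.gcd (Lp i) m' = 1) (hcopp : ∀ i, Nat.gcd (Lp i) p' = 1)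
    (hdr : ∀ i, τ i + α i - 1 = dd i * l i + r i) (hrlt : ∀ i, r i < l i) :
    Finset.univ.sup dd
      = sSup {j : ℕ | Nat.gcd (m * L / Nat.gcd (m * L) (p ^ j)) L ≠ 1} := by
  haveI : Nonempty (Fin κ) := ⟨⟨0, hκ⟩⟩
  set D := Finset.univ.sup dd with hD
  -- basic nonvanishing
  have hm0 : m' ≠ 0 := by omega
  have hmLeq : m * L = (∏ i, Lp i ^ (τ i + α i)) * m' := by
    rw [hm, hL]
    simp_rw [pow_add, Finset.prod_mul_distrib]
    ring
  have hppow : ∀ j : ℕ, p ^ j = (∏ i, Lp i ^ (l i * j)) * p' ^ j := by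
    intro j
    rw [hp, mul_pow, ← Finset.prod_pow]
    simp_rw [← pow_mul]
  have hN0 : m * L ≠ 0 := by
    rw [hmLeq]
    exact mul_ne_zero (Finset.prod_ne_zero_iff.mpr
      (fun i _ => pow_ne_zero _ (hprime i).pos.ne')) hm0
  have hp0 : p ≠ 0 := by
    have := hppow 1
    simp only [pow_one] at this
    rw [this]
    exact mul_ne_zero (Finset.prod_ne_zero_iff.mpr
      (fun i _ => pow_ne_zero _ (hprime i).pos.ne')) (by omega)
  -- factorization values
  have hNfact : ∀ i, (m * L).factorization (Lp i) = τ i + α i := by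
    intro i
    rw [hmLeq]
    exact fact_eval κ Lp _ m' hprime hdist hm0 hcopm i
  have hpfact : ∀ (j : ℕ) (i : Fin κ), (p ^ j).factorization (Lp i) = l i * j := by
    intro j i
    rw [hppow j]
    exact fact_eval κ Lp _ (p' ^ j) hprime hdist (pow_ne_zero _ (by omega))
      (fun i => Nat.Coprime.pow_right j (hcopp i)) i
  -- membership characterization
  have key : ∀ j : ℕ,
      Nat.gcd (m * L / Nat.gcd (m * L) (p ^ j)) L ≠ 1 ↔ j ≤ D := by
    intro j
    have hpj0 : p ^ j ≠ 0 := pow_ne_zero _ hp0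
    have hGdvd : Nat.gcd (m * L) (p ^ j) ∣ m * L := Nat.gcd_dvd_left _ _
    set X := m * L / Nat.gcd (m * L) (p ^ j) with hX
    have hX0 : X ≠ 0 := by
      apply Nat.div_ne_zero_iff_of_dvd hGdvd |>.mpr
      exact ⟨hN0, Nat.gcd_ne_zero_left hN0⟩
    have hXfact : ∀ i, X.factorization (Lp i)
        = (τ i + α i) - min (τ i + α i) (l i * j) := by
      intro i
      rw [hX, Nat.factorization_div hGdvd, Nat.factorization_gcd hN0 hpj0]
      simp only [Finsupp.tsub_apply, Finsupp.inf_apply, hNfact i, hpfact j i]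
    have hL0 : L ≠ 0 := by
      rw [hL]
      exact Finset.prod_ne_zero_iff.mpr (fun i _ => pow_ne_zero _ (hprime i).pos.ne')
    -- gcd ≠ 1 ↔ ∃ i, Lp i ∣ X
    have step1 : Nat.gcd X L ≠ 1 ↔ ∃ i, Lp i ∣ X := by
      constructor
      · intro h
        obtain ⟨q, hq, hqX, hqL⟩ := Nat.Prime.not_coprime_iff_dvd.mp h
        rw [hL] at hqL
        obtain ⟨i, _, hqi⟩ := (Nat.Prime.prime hq).exists_mem_finset_dvd hqL
        have : q ∣ Lp i := (Nat.Prime.prime hq).dvd_of_dvd_pow hqi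
        rw [(Nat.prime_dvd_prime_iff_eq hq (hprime i)).mp this] at hqX
        exact ⟨i, hqX⟩
      · rintro ⟨i, hi⟩
        have hiL : Lp i ∣ L := by
          rw [hL]
          exact dvd_trans (dvd_pow_self _ (by have := hα i; omega))
            (Finset.dvd_prod_of_mem _ (Finset.mem_univ i))
        intro h
        have := Nat.eq_one_of_dvd_coprimes (h : Nat.Coprime X L) hi hiL
        exact (hprime i).one_lt.ne' this
    rw [step1]
    -- Lp i ∣ X ↔ j ≤ dd i
    have step2 : ∀ i, Lp i ∣ X ↔ j ≤ dd i := by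
      intro i
      rw [Nat.Prime.dvd_iff_one_le_factorization (hprime i) hX0, hXfact i]
      have h1 : 1 ≤ (τ i + α i) - min (τ i + α i) (l i * j) ↔ l i * j < τ i + α i := by
        omega
      rw [h1]
      have hτα : τ i + α i = dd i * l i + r i + 1 := by
        have := hdr i; have := hα i; omega
      rw [hτα]
      constructor
      · intro h
        by_contra hc
        push_neg at hc
        have h1 : (dd i + 1) * l i ≤ j * l i := Nat.mul_le_mul_right _ hc
        rw [mul_comm (l i) j] at h
        have h2 : (dd i + 1) * l i = dd i * l i + l i := by ring
        have := hrlt i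
        linarith
      · intro h
        have h1 : j * l i ≤ dd i * l i := Nat.mul_le_mul_right _ h
        rw [mul_comm (l i) j]
        linarith
    simp_rw [step2]
    constructor
    · rintro ⟨i, hi⟩
      exact le_trans hi (Finset.le_sup (Finset.mem_univ i))
    · intro h
      obtain ⟨i, _, hi⟩ := Finset.exists_mem_eq_sup Finset.univ Finset.univ_nonempty dd
      exact ⟨i, hi ▸ h⟩
  have hset : {j : ℕ | Nat.gcd (m * L / Nat.gcd (m * L) (p ^ j)) L ≠ 1} = Set.Iic D := by
    ext j
    exact key j
  rw [hset, csSup_Iic]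
end

section
/- With notation as follows: L = L_1^{α_1} ⋯ L_κ^{α_κ} (distinct primes, α_i ≥ 1), L | p, m = L_1^{τ_1} ⋯ L_κ^{τ_κ} m', p = L_1^{l_1} ⋯ L_κ^{l_κ} p' with gcd(L_i, m') = gcd(L_i, p') = 1, and τ_i + α_i − 1 = d_i l_i + r_i with 0 ≤ r_i < l_i, d = max_i d_i. If N divides m / gcd(m, p^d) and the prime L_{i₀} divides N for some index i₀, then d_{i₀} = d. -/
open Finset

/-- Proposition 3.4: with the prime factorization data for `L`, `m`, `p` (where `L ∣ p`),
`τ_i + α_i − 1 = d_i l_i + r_i` (`0 ≤ r_i < l_i`) and `d = max_i d_i`,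
if `N ∣ m/gcd(m, p^d)` and the prime `L_{i₀}` divides `N`, then `d_{i₀} = d`. -/
theorem prop_d_i0_eq_d (κ : ℕ) (hκ : 0 < κ)
    (Lp α τ l dd r : Fin κ → ℕ) (L m p m' p' N : ℕ)
    (hprime : ∀ i, (Lp i).Prime) (hdist : Function.Injective Lp)
    (hα : ∀ i, 1 ≤ α i) (hl : ∀ i, α i ≤ l i)
    (hL : L = ∏ i, Lp i ^ α i)
    (hm' : 1 ≤ m') (hp' : 1 ≤ p') (hN : 1 ≤ N)
    (hm : m = (∏ i, Lp i ^ τ i) * m')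
    (hp : p = (∏ i, Lp i ^ l i) * p')
    (hLdvd : L ∣ p)
    (hcopm : ∀ i, Nat.gcd (Lp i) m' = 1) (hcopp : ∀ i, Nat.gcd (Lp i) p' = 1)
    (hdr : ∀ i, τ i + α i - 1 = dd i * l i + r i) (hrlt : ∀ i, r i < l i)
    (hNdvd : N ∣ m / Nat.gcd m (p ^ (Finset.univ.sup dd)))
    (i₀ : Fin κ) (hi₀ : Lp i₀ ∣ N) :
    dd i₀ = Finset.univ.sup dd := by
  set d := Finset.univ.sup dd with hd
  set q := Lp i₀ with hq
  have hqprime := hprime i₀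
  have hprodpos : ∀ e : Fin κ → ℕ, 0 < ∏ i, Lp i ^ e i :=
    fun e => Finset.prod_pos fun i _ => pow_pos (hprime i).pos _
  have hmpos : 0 < m := by rw [hm]; exact Nat.mul_pos (hprodpos τ) hm'
  have hppos : 0 < p := by rw [hp]; exact Nat.mul_pos (hprodpos l) hp'
  have key : ∀ (e : Fin κ → ℕ) (c : ℕ), (∀ i, Nat.gcd (Lp i) c = 1) → 1 ≤ c →
      Nat.factorization ((∏ i, Lp i ^ e i) * c) q = e i₀ := by
    intro e c hcop hc
    rw [Nat.factorization_mul (hprodpos e).ne' (by omega : c ≠ 0)]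
    have hcf : Nat.factorization c q = 0 :=
      Nat.factorization_eq_zero_of_not_dvd
        ((Nat.Prime.coprime_iff_not_dvd hqprime).mp (hcop i₀))
    rw [Nat.factorization_prod (fun i _ => pow_ne_zero _ (hprime i).pos.ne')]
    rw [Finsupp.add_apply, hcf, add_zero, Finsupp.finset_sum_apply]
    have : ∀ i : Fin κ, (Nat.factorization (Lp i ^ e i)) q
        = if i = i₀ then e i else 0 := by
      intro i
      rw [(hprime i).factorization_pow, Finsupp.single_apply]
      simp [hq, hdist.eq_iff]
    simp only [this, Finset.sum_ite_eq' Finset.univ i₀ e, Finset.mem_univ,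
      if_true]
  have hmf : m.factorization q = τ i₀ := by rw [hm]; exact key τ m' hcopm hm'
  have hpf : p.factorization q = l i₀ := by rw [hp]; exact key l p' hcopp hp'
  have hpd : (p ^ d).factorization q = d * l i₀ := by
    rw [Nat.factorization_pow, Finsupp.smul_apply, hpf, smul_eq_mul]
  have hpdpos : 0 < p ^ d := pow_pos hppos d
  have hgpos : 0 < Nat.gcd m (p ^ d) := Nat.gcd_pos_of_pos_left _ hmpos
  have hg : (Nat.gcd m (p ^ d)).factorization q = min (τ i₀) (d * l i₀) := by
    rw [Nat.factorization_gcd hmpos.ne' hpdpos.ne', Finsupp.inf_apply, hmf, hpd]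
  have hdivf : (m / Nat.gcd m (p ^ d)).factorization q
      = τ i₀ - min (τ i₀) (d * l i₀) := by
    rw [Nat.factorization_div (Nat.gcd_dvd_left m (p ^ d)), Finsupp.tsub_apply,
      hmf, hg]
  have hquotpos : 0 < m / Nat.gcd m (p ^ d) :=
    Nat.div_pos (Nat.le_of_dvd hmpos (Nat.gcd_dvd_left _ _)) hgpos
  have hqdvd : q ∣ m / Nat.gcd m (p ^ d) := hi₀.trans hNdvd
  have h1 : 0 < (m / Nat.gcd m (p ^ d)).factorization q :=
    hqprime.factorization_pos_of_dvd hquotpos.ne' hqdvd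
  rw [hdivf] at h1
  have hτ : d * l i₀ < τ i₀ := by omega
  have hdd_le : dd i₀ ≤ d := Finset.le_sup (Finset.mem_univ i₀)
  by_contra hne
  have hlt : dd i₀ + 1 ≤ d := by omega
  have hmul : (dd i₀ + 1) * l i₀ ≤ d * l i₀ := Nat.mul_le_mul_right _ hlt
  have hexp : (dd i₀ + 1) * l i₀ = dd i₀ * l i₀ + l i₀ := by ring
  have h2 := hdr i₀
  have h3 := hrlt i₀
  have h4 := hα i₀
  omega
end

section
/- Let N, L ≥ 2 and m, p be positive integers, and let d be defined as the maximum over i of d_i where τ_i + α_i − 1 = d_i l_i + r_i (0 ≤ r_i < l_i) for the prime factorization data of L, m, p as above. If N | p, L | p, and N | m / gcd(m, p^d), then N·L divides p. -/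
open Finset

lemma fact_prod_pow_apply {κ : ℕ} (Lp e : Fin κ → ℕ) (hprime : ∀ i, (Lp i).Prime) (q : ℕ) :
    (∏ j, Lp j ^ e j).factorization q = ∑ j, if Lp j = q then e j else 0 := by
  rw [Nat.factorization_prod (fun j _ => pow_ne_zero _ (hprime j).ne_zero)]
  rw [Finsupp.finset_sum_apply]
  refine Finset.sum_congr rfl fun j _ => ?_
  rw [(hprime j).factorization_pow, Finsupp.single_apply]

/-- Remark 3.1: if `N ∣ p`, `L ∣ p`, and `N ∣ m/gcd(m, p^d)` (with `d` defined from the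
prime factorization data of `L`, `m`, `p` via `τ_i + α_i − 1 = d_i l_i + r_i`,
`d = max_i d_i`), then `N·L ∣ p`. -/
theorem NL_dvd_p (κ : ℕ) (hκ : 0 < κ)
    (Lp α τ l dd r : Fin κ → ℕ) (L m p m' p' N : ℕ)
    (hprime : ∀ i, (Lp i).Prime) (hdist : Function.Injective Lp)
    (hα : ∀ i, 1 ≤ α i) (hl : ∀ i, α i ≤ l i)
    (hL : L = ∏ i, Lp i ^ α i) (hL2 : 2 ≤ L) (hN2 : 2 ≤ N)
    (hm' : 1 ≤ m') (hp' : 1 ≤ p') (hm1 : 1 ≤ m)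
    (hm : m = (∏ i, Lp i ^ τ i) * m')
    (hp : p = (∏ i, Lp i ^ l i) * p')
    (hcopm : ∀ i, Nat.gcd (Lp i) m' = 1) (hcopp : ∀ i, Nat.gcd (Lp i) p' = 1)
    (hdr : ∀ i, τ i + α i - 1 = dd i * l i + r i) (hrlt : ∀ i, r i < l i)
    (hNp : N ∣ p) (hLp : L ∣ p)
    (hNdvd : N ∣ m / Nat.gcd m (p ^ (Finset.univ.sup dd))) :
    N * L ∣ p := by
  set D := Finset.univ.sup dd with hDdef
  have hprodp0 : (∏ i, Lp i ^ l i) ≠ 0 :=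
    Finset.prod_ne_zero_iff.2 fun i _ => pow_ne_zero _ (hprime i).ne_zero
  have hprodm0 : (∏ i, Lp i ^ τ i) ≠ 0 :=
    Finset.prod_ne_zero_iff.2 fun i _ => pow_ne_zero _ (hprime i).ne_zero
  have hp'0 : p' ≠ 0 := by omega
  have hm'0 : m' ≠ 0 := by omega
  have hp0 : p ≠ 0 := by rw [hp]; exact Nat.mul_ne_zero hprodp0 hp'0
  have hm0 : m ≠ 0 := by omega
  have hN0 : N ≠ 0 := by omega
  have hL0 : L ≠ 0 := by omega
  have hg : Nat.gcd m (p ^ D) ∣ m := Nat.gcd_dvd_left _ _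
  have hg0 : Nat.gcd m (p ^ D) ≠ 0 := by
    intro h
    exact hm0 (Nat.eq_zero_of_gcd_eq_zero_left h)
  have hq0 : m / Nat.gcd m (p ^ D) ≠ 0 := by
    have h1 := Nat.le_of_dvd (Nat.pos_of_ne_zero hm0) hg
    exact Nat.ne_of_gt (Nat.div_pos h1 (Nat.pos_of_ne_zero hg0))
  rw [← Nat.factorization_le_iff_dvd (Nat.mul_ne_zero hN0 hL0) hp0, Finsupp.le_def]
  intro q
  rw [Nat.factorization_mul hN0 hL0, Finsupp.add_apply]
  by_cases hq : ∃ i, Lp i = q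
  · obtain ⟨i, rfl⟩ := hq
    have hLq : L.factorization (Lp i) = α i := by
      rw [hL, fact_prod_pow_apply Lp α hprime]
      simp [hdist.eq_iff]
    have hnd_p' : (p').factorization (Lp i) = 0 :=
      Nat.factorization_eq_zero_of_not_dvd (fun h => (hprime i).one_lt.ne'
        (Nat.eq_one_of_dvd_one (hcopp i ▸ Nat.dvd_gcd dvd_rfl h)))
    have hnd_m' : (m').factorization (Lp i) = 0 :=
      Nat.factorization_eq_zero_of_not_dvd (fun h => (hprime i).one_lt.ne'
        (Nat.eq_one_of_dvd_one (hcopm i ▸ Nat.dvd_gcd dvd_rfl h)))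
    have hpq : p.factorization (Lp i) = l i := by
      rw [hp, Nat.factorization_mul hprodp0 hp'0, Finsupp.add_apply,
        fact_prod_pow_apply Lp l hprime, hnd_p']
      simp [hdist.eq_iff]
    have hmq : m.factorization (Lp i) = τ i := by
      rw [hm, Nat.factorization_mul hprodm0 hm'0, Finsupp.add_apply,
        fact_prod_pow_apply Lp τ hprime, hnd_m']
      simp [hdist.eq_iff]
    have hNle : N.factorization (Lp i) ≤ (m / Nat.gcd m (p ^ D)).factorization (Lp i) :=
      Finsupp.le_def.1 ((Nat.factorization_le_iff_dvd hN0 hq0).2 hNdvd) (Lp i)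
    rw [Nat.factorization_div hg, Finsupp.tsub_apply,
      Nat.factorization_gcd hm0 (pow_ne_zero _ hp0), Finsupp.inf_apply,
      Nat.factorization_pow, Finsupp.smul_apply, hmq, hpq, smul_eq_mul] at hNle
    have hDi : dd i * l i ≤ D * l i :=
      Nat.mul_le_mul_right _ (Finset.le_sup (Finset.mem_univ i))
    have h1 := hdr i
    have h2 := hrlt i
    have h3 := hα i
    have h4 := hl i
    rw [hLq, hpq]
    omega
  · have hLq : L.factorization q = 0 := by
      rw [hL, fact_prod_pow_apply Lp α hprime]
      refine Finset.sum_eq_zero fun j _ => ?_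
      rw [if_neg (fun h => hq ⟨j, h⟩)]
    rw [hLq, add_zero]
    exact Finsupp.le_def.1 ((Nat.factorization_le_iff_dvd hN0 hp0).2 hNp) q
end

section
/- Suppose d ≥ 0 and n₀ ≥ 1 are integers, N, L ≥ 2, and m, m̃, p̃ are positive integers with m = gcd(m,(NL)^d)·m̃ and (NL)^d = gcd(m,(NL)^d)·p̃, and suppose (NL)^{n₀} a = (NL)^d L m̃ for some integer a not divisible by L. Then n₀ ≥ d + 1, and consequently N divides m̃ = m / gcd(m, (NL)^d). -/
/-- Key arithmetic step in the proof that tiling implies the divisibility condition: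
if `m = gcd(m,(NL)^d)·m̃`, `(NL)^d = gcd(m,(NL)^d)·p̃`, and
`(NL)^{n₀} a = (NL)^d L m̃` for some integer `a` not divisible by `L`,
then `n₀ ≥ d + 1`, and consequently `N ∣ m̃ = m/gcd(m,(NL)^d)`. -/
theorem tiling_arith_step (d n₀ N L m mt pt : ℕ) (a : ℤ)
    (hn₀ : 1 ≤ n₀) (hN : 2 ≤ N) (hL : 2 ≤ L)
    (hmpos : 0 < m) (hmtpos : 0 < mt) (hptpos : 0 < pt)
    (hmt : m = Nat.gcd m ((N * L) ^ d) * mt)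
    (hpt : (N * L) ^ d = Nat.gcd m ((N * L) ^ d) * pt)
    (ha : ¬ ((L : ℤ) ∣ a))
    (heq : ((N : ℤ) * L) ^ n₀ * a = ((N : ℤ) * L) ^ d * L * (mt : ℤ)) :
    d + 1 ≤ n₀ ∧ N ∣ mt := by
  have hN0 : (N : ℤ) ≠ 0 := by positivity
  have hL0 : (L : ℤ) ≠ 0 := by positivity
  have hNL0 : ((N : ℤ) * L) ≠ 0 := mul_ne_zero hN0 hL0
  have hd1 : d + 1 ≤ n₀ := by
    by_contra h
    have hle : n₀ ≤ d := by omega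
    have hsplit : ((N : ℤ) * L) ^ d = ((N : ℤ) * L) ^ n₀ * ((N : ℤ) * L) ^ (d - n₀) := by
      rw [← pow_add]; congr 1; omega
    have hcancel : a = ((N : ℤ) * L) ^ (d - n₀) * L * (mt : ℤ) := by
      have := heq
      rw [hsplit] at this
      have h2 : ((N : ℤ) * L) ^ n₀ * a =
          ((N : ℤ) * L) ^ n₀ * (((N : ℤ) * L) ^ (d - n₀) * L * (mt : ℤ)) := by
        rw [this]; ring
      exact mul_left_cancel₀ (pow_ne_zero _ hNL0) h2
    exact ha ⟨((N : ℤ) * L) ^ (d - n₀) * (mt : ℤ), by rw [hcancel]; ring⟩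
  refine ⟨hd1, ?_⟩
  have hsplit : ((N : ℤ) * L) ^ n₀ =
      ((N : ℤ) * L) ^ d * L * ((N : ℤ) * (((N : ℤ) * L) ^ (n₀ - d - 1))) := by
    have : n₀ = d + 1 + (n₀ - d - 1) := by omega
    conv_lhs => rw [this, pow_add, pow_succ]
    ring
  have hcancel : (mt : ℤ) = (N : ℤ) * (((N : ℤ) * L) ^ (n₀ - d - 1) * a) := by
    have h2 : ((N : ℤ) * L) ^ d * L * ((N : ℤ) * (((N : ℤ) * L) ^ (n₀ - d - 1) * a)) =
        ((N : ℤ) * L) ^ d * L * (mt : ℤ) := by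
      rw [← heq, hsplit]; ring
    exact (mul_left_cancel₀ (mul_ne_zero (pow_ne_zero _ hNL0) hL0) h2).symm
  have : (N : ℤ) ∣ (mt : ℤ) := ⟨_, hcancel⟩
  exact_mod_cast this
end

section
/- Let p = 72 = 2³·3², and let m = 2^τ m' be a positive integer with τ ≥ 0 and m' odd. Let d = max{ i ∈ ℕ : gcd( 4m / gcd(4m, 72^i), 4 ) ≠ 1 }. Then no positive integer m satisfies 12 | 72, 4 | 72 and 4 | m/gcd(m, 72^d) with this d; that is, 4 does not divide (2^τ m')/gcd(2^τ m', 72^d). -/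
private lemma fact72 (i : ℕ) : (72 ^ i).factorization 2 = 3 * i := by
  rw [Nat.factorization_pow]
  have : (72 : ℕ).factorization 2 = 3 := by
    rw [show (72 : ℕ) = 2 ^ 3 * 9 from rfl,
      Nat.factorization_mul (by norm_num) (by norm_num), Finsupp.add_apply,
      Nat.Prime.factorization_pow Nat.prime_two, Nat.factorization_eq_zero_of_not_dvd (by norm_num)]
    simp
  simp [this, Nat.mul_comm]

private lemma val_div_gcd (a b τ : ℕ) (ha : a ≠ 0) (hb : b ≠ 0)
    (hva : a.factorization 2 = τ) :
    (a / Nat.gcd a b).factorization 2 = τ - min τ (b.factorization 2) := by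
  have hg : Nat.gcd a b ∣ a := Nat.gcd_dvd_left a b
  rw [Nat.factorization_div hg]
  rw [Nat.factorization_gcd ha hb]
  simp [hva, min_def]

/-- Example 1.3 (arithmetic content): for `p = 72` and `m = 2^τ m'` with `m'` odd,
letting `d = max{ i : gcd(4m/gcd(4m, 72^i), 4) ≠ 1 }`, one never has
`4 ∣ m/gcd(m, 72^d)`; hence no positive integer `m` makes the associated
self-similar measure spectral. -/
theorem example_72_not_spectral (τ : ℕ) (m' : ℕ) (hm' : Odd m') (hm'pos : 0 < m')
    (m : ℕ) (hm : m = 2 ^ τ * m')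
    (d : ℕ) (hd : d = sSup {i : ℕ | Nat.gcd (4 * m / Nat.gcd (4 * m) (72 ^ i)) 4 ≠ 1}) :
    ¬ (4 ∣ m / Nat.gcd m (72 ^ d)) := by
  have hmne : m ≠ 0 := by
    rw [hm]; positivity
  have h2m' : ¬ (2 ∣ m') := by
    rcases hm' with ⟨k, hk⟩
    omega
  have hvm : m.factorization 2 = τ := by
    rw [hm, Nat.factorization_mul (by positivity) hm'pos.ne',
      Finsupp.add_apply, Nat.Prime.factorization_pow Nat.prime_two,
      Nat.factorization_eq_zero_of_not_dvd h2m']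
    simp
  have hv4m : (4 * m).factorization 2 = τ + 2 := by
    rw [Nat.factorization_mul (by norm_num) hmne, Finsupp.add_apply, hvm]
    have : (4 : ℕ).factorization 2 = 2 := by
      rw [show (4 : ℕ) = 2 ^ 2 from rfl, Nat.Prime.factorization_pow Nat.prime_two]
      simp
    omega
  -- characterize the set
  have hset : {i : ℕ | Nat.gcd (4 * m / Nat.gcd (4 * m) (72 ^ i)) 4 ≠ 1}
      = Set.Iic ((τ + 1) / 3) := by
    ext i
    have h72 : (72 : ℕ) ^ i ≠ 0 := by positivity
    have hq : (4 * m / Nat.gcd (4 * m) (72 ^ i)).factorization 2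
        = (τ + 2) - min (τ + 2) (3 * i) := by
      rw [val_div_gcd _ _ _ (by positivity) h72 hv4m, fact72]
    have hqne : 4 * m / Nat.gcd (4 * m) (72 ^ i) ≠ 0 := by
      apply Nat.div_ne_zero_iff_of_dvd (Nat.gcd_dvd_left _ _) |>.mpr
      constructor
      · positivity
      · exact Nat.gcd_ne_zero_right h72
    simp only [Set.mem_setOf_eq, Set.mem_Iic]
    constructor
    · intro h
      by_contra hc
      push_neg at hc
      have h3i : 3 * i ≥ τ + 2 := by omega
      have : (4 * m / Nat.gcd (4 * m) (72 ^ i)).factorization 2 = 0 := by omega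
      -- then q coprime to 2, hence to 4
      have h2 : ¬ (2 ∣ 4 * m / Nat.gcd (4 * m) (72 ^ i)) := by
        intro hdvd
        have := (Nat.Prime.dvd_iff_one_le_factorization Nat.prime_two hqne).mp hdvd
        omega
      have hco : Nat.Coprime 2 (4 * m / Nat.gcd (4 * m) (72 ^ i)) :=
        (Nat.Prime.coprime_iff_not_dvd Nat.prime_two).mpr h2
      have : Nat.Coprime (4 * m / Nat.gcd (4 * m) (72 ^ i)) 4 := by
        have := (hco.pow_left 2).symm
        simpa using this
      exact h this
    · intro h hco
      have h3i : 3 * i ≤ τ + 1 := by omega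
      have hv : 1 ≤ (4 * m / Nat.gcd (4 * m) (72 ^ i)).factorization 2 := by omega
      have h2 : 2 ∣ 4 * m / Nat.gcd (4 * m) (72 ^ i) :=
        (Nat.Prime.dvd_iff_one_le_factorization Nat.prime_two hqne).mpr hv
      have h2' : (2 : ℕ) ∣ 4 := by norm_num
      have := Nat.dvd_gcd h2 h2'
      rw [hco] at this
      omega
  have hdval : d = (τ + 1) / 3 := by
    rw [hd, hset, csSup_Iic]
  intro hdvd
  have h72 : (72 : ℕ) ^ d ≠ 0 := by positivity
  have hrne : m / Nat.gcd m (72 ^ d) ≠ 0 := by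
    apply Nat.div_ne_zero_iff_of_dvd (Nat.gcd_dvd_left _ _) |>.mpr
    exact ⟨hmne, Nat.gcd_ne_zero_right h72⟩
  have hvr : (m / Nat.gcd m (72 ^ d)).factorization 2 = τ - min τ (3 * d) := by
    rw [val_div_gcd _ _ _ hmne h72 hvm, fact72]
  have h4 : (2:ℕ)^2 ∣ m / Nat.gcd m (72 ^ d) := by norm_num at hdvd ⊢; exact hdvd
  have := (Nat.Prime.pow_dvd_iff_le_factorization Nat.prime_two hrne).mp h4
  have h3d : 3 * d ≥ τ - 1 := by omega
  omega
end

section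
/- Let p = 144 = 2⁴·3², N = 12, L = 4, and m = 2^{τ₁} 3^{τ₂} m' with gcd(m', 6) = 1. Let d = max{ i ∈ ℕ : gcd( 4m/gcd(4m, 144^i), 4 ) ≠ 1 }. Then 12 divides m / gcd(m, 144^d) if and only if there exists a nonnegative integer k with τ₁ = 4k + 2 and τ₂ ≥ 2k + 1. -/
lemma fact144 (i : ℕ) : ((144:ℕ)^i).factorization 2 = 4*i ∧ ((144:ℕ)^i).factorization 3 = 2*i := by
  rw [show (144:ℕ) = 2^4*3^2 by norm_num, Nat.factorization_pow,
    Nat.factorization_mul (by norm_num) (by norm_num),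
    Nat.Prime.factorization_pow (by norm_num), Nat.Prime.factorization_pow (by norm_num)]
  constructor <;> · simp [Finsupp.single_apply]; ring

lemma quot_fact (a b m' : ℕ) (hm' : Nat.gcd m' 6 = 1) (hpos : 0 < m') (i : ℕ)
    (n : ℕ) (hn : n = 2^a*3^b*m') :
    (n / Nat.gcd n (144^i)).factorization 2 = a - min a (4*i) ∧
    (n / Nat.gcd n (144^i)).factorization 3 = b - min b (2*i) := by
  have h2 : ¬ (2 ∣ m') := fun h => by
    have : (2:ℕ) ∣ 1 := hm' ▸ Nat.dvd_gcd h (by norm_num)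
    norm_num at this
  have h3 : ¬ (3 ∣ m') := fun h => by
    have : (3:ℕ) ∣ 1 := hm' ▸ Nat.dvd_gcd h (by norm_num)
    norm_num at this
  have hn0 : n ≠ 0 := by rw [hn]; positivity
  have h1440 : (144:ℕ)^i ≠ 0 := by positivity
  have hg : Nat.gcd n (144^i) ∣ n := Nat.gcd_dvd_left _ _
  have hfn2 : n.factorization 2 = a := by
    rw [hn, Nat.factorization_mul (Nat.mul_ne_zero (pow_ne_zero _ two_ne_zero) (pow_ne_zero _ three_ne_zero)) (by omega),
      Nat.factorization_mul (pow_ne_zero _ two_ne_zero) (pow_ne_zero _ three_ne_zero),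
      Nat.Prime.factorization_pow (by norm_num), Nat.Prime.factorization_pow (by norm_num)]
    simp [Finsupp.single_apply, Nat.factorization_eq_zero_of_not_dvd h2]
  have hfn3 : n.factorization 3 = b := by
    rw [hn, Nat.factorization_mul (Nat.mul_ne_zero (pow_ne_zero _ two_ne_zero) (pow_ne_zero _ three_ne_zero)) (by omega),
      Nat.factorization_mul (pow_ne_zero _ two_ne_zero) (pow_ne_zero _ three_ne_zero),
      Nat.Prime.factorization_pow (by norm_num), Nat.Prime.factorization_pow (by norm_num)]
    simp [Finsupp.single_apply, Nat.factorization_eq_zero_of_not_dvd h3]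
  have hdiv := Nat.factorization_div hg
  have hgcd := Nat.factorization_gcd hn0 h1440
  have e2 := fact144 i
  constructor
  · rw [hdiv, hgcd]; simp only [Finsupp.tsub_apply, Finsupp.inf_apply, hfn2, e2.1]
  · rw [hdiv, hgcd]; simp only [Finsupp.tsub_apply, Finsupp.inf_apply, hfn3, e2.2]

lemma quot_ne_zero (n i : ℕ) (hn0 : n ≠ 0) : n / Nat.gcd n (144^i) ≠ 0 := by
  have hgpos : 0 < Nat.gcd n (144^i) := Nat.gcd_pos_of_pos_left _ (Nat.pos_of_ne_zero hn0)
  have := Nat.div_pos (Nat.le_of_dvd (Nat.pos_of_ne_zero hn0) (Nat.gcd_dvd_left _ _)) hgpos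
  omega

/-- Example 1.4 (arithmetic content): for `p = 144` and `m = 2^{τ₁} 3^{τ₂} m'` with
`gcd(m', 6) = 1`, letting `d = max{ i : gcd(4m/gcd(4m, 144^i), 4) ≠ 1 }`,
one has `12 ∣ m/gcd(m, 144^d)` if and only if `τ₁ = 4k + 2` and `τ₂ ≥ 2k + 1`
for some nonnegative integer `k`. -/
theorem example_144_spectral_iff (τ₁ τ₂ : ℕ) (m' : ℕ) (hm' : Nat.gcd m' 6 = 1)
    (hm'pos : 0 < m') (m : ℕ) (hm : m = 2 ^ τ₁ * 3 ^ τ₂ * m')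
    (d : ℕ) (hd : d = sSup {i : ℕ | Nat.gcd (4 * m / Nat.gcd (4 * m) (144 ^ i)) 4 ≠ 1}) :
    (12 ∣ m / Nat.gcd m (144 ^ d)) ↔
      ∃ k : ℕ, τ₁ = 4 * k + 2 ∧ 2 * k + 1 ≤ τ₂ := by
  have hm0 : m ≠ 0 := by rw [hm]; positivity
  have h4m : 4 * m = 2^(τ₁+2)*3^τ₂*m' := by rw [hm]; ring
  have h4m0 : 4 * m ≠ 0 := by omega
  -- characterize the set
  have hset : {i : ℕ | Nat.gcd (4 * m / Nat.gcd (4 * m) (144 ^ i)) 4 ≠ 1}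
      = Set.Iic ((τ₁+1)/4) := by
    ext i
    set x := 4 * m / Nat.gcd (4 * m) (144 ^ i) with hx
    have hx0 : x ≠ 0 := quot_ne_zero _ i h4m0
    have hf := (quot_fact (τ₁+2) τ₂ m' hm' hm'pos i (4*m) h4m).1
    have hdvd2 : 2 ∣ x ↔ 1 ≤ (τ₁+2) - min (τ₁+2) (4*i) := by
      rw [← hf, ← Nat.Prime.dvd_iff_one_le_factorization Nat.prime_two hx0]
    have hcop : Nat.gcd x 4 = 1 ↔ ¬ (2 ∣ x) := by
      rw [show (4:ℕ) = 2^2 by norm_num]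
      rw [show (Nat.gcd x (2^2) = 1) = Nat.Coprime x (2^2) from rfl,
        Nat.coprime_pow_right_iff (by norm_num), Nat.coprime_comm,
        Nat.Prime.coprime_iff_not_dvd Nat.prime_two]
    simp only [Set.mem_setOf_eq, Set.mem_Iic]
    rw [← not_iff_not]
    push_neg
    rw [hcop, hdvd2]
    omega
  have hd' : d = (τ₁+1)/4 := by rw [hd, hset, csSup_Iic]
  -- characterize divisibility by 12
  have hf2 := (quot_fact τ₁ τ₂ m' hm' hm'pos d m hm).1
  have hf3 := (quot_fact τ₁ τ₂ m' hm' hm'pos d m hm).2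
  set y := m / Nat.gcd m (144 ^ d) with hy
  have hy0 : y ≠ 0 := quot_ne_zero _ d hm0
  have h12 : (12 ∣ y) ↔ (2 ≤ τ₁ - min τ₁ (4*d) ∧ 1 ≤ τ₂ - min τ₂ (2*d)) := by
    have h4 : (2^2 ∣ y) ↔ 2 ≤ τ₁ - min τ₁ (4*d) := by
      rw [Nat.Prime.pow_dvd_iff_le_factorization Nat.prime_two hy0, hf2]
    have h3 : (3 ∣ y) ↔ 1 ≤ τ₂ - min τ₂ (2*d) := by
      rw [← hf3, ← Nat.Prime.dvd_iff_one_le_factorization Nat.prime_three hy0]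
    rw [← h4, ← h3]
    constructor
    · intro h; exact ⟨dvd_trans (by norm_num) h, dvd_trans (by norm_num) h⟩
    · rintro ⟨ha, hb⟩
      exact (show (12:ℕ) = 2^2*3 by norm_num) ▸ Nat.Coprime.mul_dvd_of_dvd_of_dvd (by norm_num) ha hb
  rw [h12]
  constructor
  · intro h; exact ⟨d, by omega, by omega⟩
  · rintro ⟨k, hk1, hk2⟩
    omega
end

section
/- Let μ₁, μ₂ be Borel probability measures on ℝ with compact support, neither a Dirac point mass, and let μ = μ₁ * μ₂ be their convolution. If Λ ⊂ ℝ (with 0 ∈ Λ) is such that {e^{2πiλx}}_{λ∈Λ} is orthogonal in L²(μ₁), then it is also orthogonal in L²(μ), but it is not an orthonormal basis of L²(μ). -/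
/-!
Orthogonality passes from `μ₁` to `μ = μ₁ ∗ μ₂` because `μ̂ = μ̂₁ μ̂₂`. If the exponentials
`e_λ` were moreover complete in `L²(μ)`, Parseval in `L²(μ)` and Bessel in `L²(μ₁)` would give,
for every `t`,
`1 = ∑_λ |μ̂₁(t - λ)|² |μ̂₂(t - λ)|² ≤ ∑_λ |μ̂₁(t - λ)|² ≤ 1`,
so the term `λ = 0` forces `|μ̂₂(t)| = 1` wherever `μ̂₁(t) ≠ 0`, in particular near `0`.
Equality in `|∫ e^{itx} dμ₂| ≤ 1` makes `e^{itx}` constant `μ₂`-a.e., and doing this for two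
incommensurable `t` confines `μ₂` to a single point.
-/

open MeasureTheory Complex Set Filter Topology Submodule BoundedContinuousFunction

open scoped Real InnerProductSpace ComplexConjugate

section FiniteMeasure

variable {E : Type*} [NormedAddCommGroup E] [InnerProductSpace ℝ E] [MeasurableSpace E]
  [BorelSpace E] {μ : Measure E} [IsFiniteMeasure μ]

noncomputable def charL2 (μ : Measure E) [IsFiniteMeasure μ] (t : E) : Lp ℂ 2 μ :=
  BoundedContinuousFunction.toLp 2 μ ℂ (innerProbChar t)

lemma inner_charL2_left (t : E) (g : Lp ℂ 2 μ) :
    ⟪charL2 μ t, g⟫_ℂ = ∫ x, g x * conj (exp (⟪x, t⟫_ℝ * I)) ∂μ := by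
  rw [L2.inner_def]
  refine integral_congr_ae ?_
  filter_upwards [(innerProbChar t).coeFn_toLp 2 μ ℂ] with x hx
  rw [charL2, hx, innerProbChar_apply, RCLike.inner_apply, mul_comm]

lemma inner_charL2 (s t : E) : ⟪charL2 μ s, charL2 μ t⟫_ℂ = charFun μ (t - s) := by
  rw [charL2, charL2, BoundedContinuousFunction.inner_toLp, charFun_apply]
  congr with x
  rw [innerProbChar_apply, innerProbChar_apply, ← exp_conj, ← exp_add, inner_sub_right]
  simp only [map_mul, conj_ofReal, conj_I]
  push_cast
  ring_nf

lemma summable_norm_charFun_sq {ι : Type*} {τ : ι → E}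
    (h : Orthonormal ℂ fun i => charL2 μ (τ i)) (t : E) :
    Summable fun i => ‖charFun μ (t - τ i)‖ ^ 2 := by
  simpa only [inner_charL2] using h.inner_products_summable (charL2 μ t)

end FiniteMeasure

section ProbabilityMeasure

variable {E : Type*} [NormedAddCommGroup E] [InnerProductSpace ℝ E] [MeasurableSpace E]
  [BorelSpace E] {μ : Measure E} [IsProbabilityMeasure μ]

lemma norm_charL2 (t : E) : ‖charL2 μ t‖ = 1 := by
  have h : ‖charL2 μ t‖ ^ 2 = 1 := by
    rw [@norm_sq_eq_re_inner ℂ, inner_charL2, sub_self, charFun_zero, probReal_univ]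
    simp
  exact (pow_eq_one_iff_of_nonneg (norm_nonneg _) two_ne_zero).mp h

lemma orthonormal_charL2 {ι : Type*} {τ : ι → E}
    (h : Pairwise fun i j => charFun μ (τ i - τ j) = 0) :
    Orthonormal ℂ fun i => charL2 μ (τ i) := by
  refine ⟨fun i => norm_charL2 (τ i), fun i j hij => ?_⟩
  simp only [inner_charL2, h hij.symm]

lemma tsum_norm_charFun_sq_le_one {ι : Type*} {τ : ι → E}
    (h : Orthonormal ℂ fun i => charL2 μ (τ i)) (t : E) :
    ∑' i, ‖charFun μ (t - τ i)‖ ^ 2 ≤ 1 := by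
  simpa only [inner_charL2, norm_charL2, one_pow] using h.tsum_inner_products_le (charL2 μ t)

lemma hasSum_norm_charFun_sq {ι : Type*} {τ : ι → E}
    (h : Orthonormal ℂ fun i => charL2 μ (τ i))
    (hcomplete : (span ℂ (range fun i => charL2 μ (τ i)))ᗮ = ⊥) (t : E) :
    HasSum (fun i => ‖charFun μ (t - τ i)‖ ^ 2) 1 := by
  have := (HilbertBasis.mkOfOrthogonalEqBot h hcomplete).hasSum_inner_mul_inner
    (charL2 μ t) (charL2 μ t)
  simp only [HilbertBasis.coe_mkOfOrthogonalEqBot, inner_charL2, sub_self, charFun_zero,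
    probReal_univ, ← neg_sub t, charFun_neg, Complex.conj_mul'] at this
  exact_mod_cast this

end ProbabilityMeasure

lemma eq_one_of_hasSum_mul_of_tsum_le_one {ι : Type*} {a b : ι → ℝ} (ha : ∀ i, 0 ≤ a i)
    (hb : ∀ i, b i ≤ 1) (hsa : Summable a) (hle : ∑' i, a i ≤ 1)
    (hab : HasSum (fun i => a i * b i) 1) {i : ι} (hi : a i ≠ 0) : b i = 1 := by
  have hgap : HasSum (fun j => a j * (1 - b j)) (∑' j, a j - 1) := by
    simpa only [mul_sub, mul_one] using hsa.hasSum.sub hab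
  have hgap_nonneg : ∀ j, 0 ≤ a j * (1 - b j) := fun j => mul_nonneg (ha j) (sub_nonneg.2 (hb j))
  have hgap_i : a i * (1 - b i) = 0 :=
    le_antisymm ((le_hasSum hgap i fun j _ => hgap_nonneg j).trans (by linarith)) (hgap_nonneg i)
  linarith [(mul_eq_zero.1 hgap_i).resolve_left hi]

theorem norm_charFun_eq_one_of_complete_conv {E : Type*} [NormedAddCommGroup E]
    [InnerProductSpace ℝ E] [MeasurableSpace E] [BorelSpace E] [SecondCountableTopology E]
    {μ ν : Measure E} [IsProbabilityMeasure μ] [IsProbabilityMeasure ν] {ι : Type*} {τ : ι → E}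
    {i₀ : ι} (hi₀ : τ i₀ = 0) (horth : Pairwise fun i j => charFun μ (τ i - τ j) = 0)
    (hcomplete : (span ℂ (range fun i => charL2 (μ ∗ ν) (τ i)))ᗮ = ⊥) {t : E}
    (ht : charFun μ t ≠ 0) : ‖charFun ν t‖ = 1 := by
  have horth_conv : Pairwise fun i j => charFun (μ ∗ ν) (τ i - τ j) = 0 := fun i j hij => by
    simp only [charFun_conv, horth hij, zero_mul]
  have hparseval := hasSum_norm_charFun_sq (orthonormal_charL2 horth_conv) hcomplete t
  simp only [charFun_conv, norm_mul, mul_pow] at hparseval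
  have hbessel := orthonormal_charL2 (μ := μ) horth
  have h := eq_one_of_hasSum_mul_of_tsum_le_one (fun i => by positivity)
    (fun i => pow_le_one₀ (norm_nonneg _) (norm_charFun_le_one _))
    (summable_norm_charFun_sq hbessel t) (tsum_norm_charFun_sq_le_one hbessel t) hparseval
    (i := i₀) (by simpa [hi₀] using ht)
  rw [hi₀, sub_zero] at h
  exact (pow_eq_one_iff_of_nonneg (norm_nonneg _) two_ne_zero).mp h

lemma ae_eq_charFun_of_norm_charFun_eq_one {E : Type*} [NormedAddCommGroup E]
    [InnerProductSpace ℝ E] [MeasurableSpace E] {μ : Measure E} [IsProbabilityMeasure μ] {t : E}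
    (h : ‖charFun μ t‖ = 1) : ∀ᵐ x ∂μ, exp (⟪x, t⟫_ℝ * I) = charFun μ t := by
  have hle : ∀ᵐ x ∂μ, ‖exp (⟪x, t⟫_ℝ * I)‖ ≤ 1 :=
    ae_of_all _ fun x => (norm_exp_ofReal_mul_I _).le
  rcases ae_eq_const_or_norm_integral_lt_of_norm_le_const hle with h' | h'
  · filter_upwards [h'] with x hx
    rw [hx, Function.const_apply, average_eq_integral, charFun_apply]
  · rw [← charFun_apply, probReal_univ, mul_one, h] at h'
    exact absurd h' (lt_irrefl 1)

lemma eq_of_exp_mul_I_eq {u v x y : ℝ} (hu : u ≠ 0) (hv : Irrational (v / u))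
    (hxu : exp (u * x * I) = exp (u * y * I)) (hxv : exp (v * x * I) = exp (v * y * I)) :
    x = y := by
  obtain ⟨m, hm⟩ := (Circle.exp_eq_exp (x := u * x) (y := u * y)).1 <| Subtype.ext <| by
    simpa only [Circle.coe_exp, ofReal_mul] using hxu
  obtain ⟨n, hn⟩ := (Circle.exp_eq_exp (x := v * x) (y := v * y)).1 <| Subtype.ext <| by
    simpa only [Circle.coe_exp, ofReal_mul] using hxv
  -- `u (x - y) = 2πm` and `v (x - y) = 2πn`, so `x ≠ y` would make `v / u = n / m`.
  by_contra hxy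
  have hm0 : (m : ℝ) ≠ 0 := by
    intro h
    rw [h, zero_mul, add_zero, mul_right_inj' hu] at hm
    exact hxy hm
  have hcross : 2 * π * (v * m - n * u) = 0 := by linear_combination u * hn - v * hm
  refine hv ⟨n / m, ?_⟩
  push_cast
  rw [div_eq_div_iff hm0 hu]
  linarith [(mul_eq_zero.1 hcross).resolve_left (by positivity)]

theorem MeasureTheory.Measure.eq_dirac_of_ae_eq {α : Type*} [MeasurableSpace α]
    [MeasurableSingletonClass α] {μ : Measure α} [IsProbabilityMeasure μ] {x₀ : α}
    (h : ∀ᵐ x ∂μ, x = x₀) : μ = Measure.dirac x₀ := by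
  have hμ := (Measure.ae_mem_finset_iff (s := {x₀})).1 (by simpa using h)
  rwa [Finset.sum_singleton, (prob_compl_eq_zero_iff (measurableSet_singleton x₀)).1 (ae_iff.1 h),
    one_smul] at hμ

theorem exists_eq_dirac_of_norm_charFun_eq_one {μ : Measure ℝ} [IsProbabilityMeasure μ]
    {u v : ℝ} (hu : u ≠ 0) (hv : Irrational (v / u)) (hμu : ‖charFun μ u‖ = 1)
    (hμv : ‖charFun μ v‖ = 1) : ∃ x₀, μ = Measure.dirac x₀ := by
  have h := (ae_eq_charFun_of_norm_charFun_eq_one hμu).and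
    (ae_eq_charFun_of_norm_charFun_eq_one hμv)
  obtain ⟨x₀, hx₀⟩ := h.exists
  refine ⟨x₀, Measure.eq_dirac_of_ae_eq ?_⟩
  filter_upwards [h] with x hx
  simp only [RCLike.inner_apply, conj_trivial, ofReal_mul] at hx hx₀
  exact eq_of_exp_mul_I_eq hu hv (hx.1.trans hx₀.1.symm) (hx.2.trans hx₀.2.symm)

theorem exists_eq_dirac_of_eventually_norm_charFun_eq_one {μ : Measure ℝ}
    [IsProbabilityMeasure μ] (h : ∀ᶠ t in 𝓝 0, ‖charFun μ t‖ = 1) :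
    ∃ x₀, μ = Measure.dirac x₀ := by
  have h' : ∀ᶠ t in 𝓝 0, ‖charFun μ (√2 * t)‖ = 1 :=
    (continuous_const_mul _).tendsto' 0 0 (mul_zero _) |>.eventually h
  obtain ⟨u, hu, hμu, hμv⟩ :=
    ((eventually_mem_nhdsWithin (s := {0}ᶜ)).and (nhdsWithin_le_nhds (h.and h'))).exists
  exact exists_eq_dirac_of_norm_charFun_eq_one hu
    (by rw [mul_div_cancel_right₀ _ hu]; exact irrational_sqrt_two) hμu hμv

lemma exp_two_pi_I_mul_eq_exp_inner (l x : ℝ) :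
    exp (2 * π * I * (l * x)) = exp (⟪x, 2 * π * l⟫_ℝ * I) := by
  rw [Real.inner_apply]
  push_cast
  ring_nf

lemma integral_exp_two_pi_I_mul_eq_charFun (μ : Measure ℝ) (l : ℝ) :
    ∫ x, exp (2 * π * I * (l * x)) ∂μ = charFun μ (2 * π * l) := by
  simp only [exp_two_pi_I_mul_eq_exp_inner, charFun_apply]

theorem convolution_orthogonal_not_spectrum_general
    (μ₁ μ₂ : Measure ℝ) [IsProbabilityMeasure μ₁] [IsProbabilityMeasure μ₂]
    (hd₂ : ∀ x : ℝ, μ₂ ≠ Measure.dirac x)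
    (Λ : Set ℝ) (h0 : (0 : ℝ) ∈ Λ)
    (horth : ∀ lam₁ ∈ Λ, ∀ lam₂ ∈ Λ, lam₁ ≠ lam₂ →
      (∫ x : ℝ, Complex.exp (2 * Real.pi * Complex.I * ((lam₁ - lam₂) * x)) ∂μ₁) = 0) :
    (∀ lam₁ ∈ Λ, ∀ lam₂ ∈ Λ, lam₁ ≠ lam₂ →
      (∫ x : ℝ, Complex.exp (2 * Real.pi * Complex.I * ((lam₁ - lam₂) * x))
        ∂(μ₁.conv μ₂)) = 0) ∧
    (∃ f : ℝ → ℂ, MemLp f 2 (μ₁.conv μ₂) ∧ ¬ (f =ᵐ[μ₁.conv μ₂] 0) ∧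
      ∀ lam ∈ Λ, (∫ x : ℝ, f x *
        (starRingEnd ℂ) (Complex.exp (2 * Real.pi * Complex.I * (lam * x)))
          ∂(μ₁.conv μ₂)) = 0) := by
  simp only [← ofReal_sub, integral_exp_two_pi_I_mul_eq_charFun] at horth ⊢
  let τ : Λ → ℝ := fun l => 2 * π * l
  have horth' : Pairwise fun i j => charFun μ₁ (τ i - τ j) = 0 := fun i j hij => by
    simpa only [τ, ← mul_sub] using horth i i.2 j j.2 (Subtype.coe_ne_coe.2 hij)
  refine ⟨fun l₁ h₁ l₂ h₂ hne => by rw [charFun_conv, horth l₁ h₁ l₂ h₂ hne, zero_mul], ?_⟩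
  obtain ⟨g, hg, hg0⟩ := (span ℂ (range fun i => charL2 (μ₁ ∗ μ₂) (τ i)))ᗮ.ne_bot_iff.1
    fun hcomplete => by
      obtain ⟨x, hx⟩ := exists_eq_dirac_of_eventually_norm_charFun_eq_one <|
        (continuous_charFun.continuousAt.eventually_ne (by simp)).mono fun t ht =>
          norm_charFun_eq_one_of_complete_conv (i₀ := ⟨0, h0⟩) (by simp [τ]) horth' hcomplete ht
      exact hd₂ x hx
  refine ⟨g, Lp.memLp g, mt Lp.eq_zero_iff_ae_eq_zero.2 hg0, fun l hl => ?_⟩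
  have := (mem_orthogonal _ _).1 hg _ (subset_span ⟨⟨l, hl⟩, rfl⟩)
  simpa only [inner_charL2_left, exp_two_pi_I_mul_eq_exp_inner, τ] using this

/-- Theorem 2.3 (Dai–He–Lau): let `μ = μ₁ ∗ μ₂` be the convolution of two compactly
supported Borel probability measures on `ℝ`, neither of which is a Dirac measure.
If `{e^{2πiλx}}_{λ∈Λ}` (with `0 ∈ Λ`) is orthogonal in `L²(μ₁)`, then it is orthogonal
in `L²(μ)`, but it is not complete in `L²(μ)` (hence not an orthonormal basis). -/
theorem convolution_orthogonal_not_spectrum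
    (μ₁ μ₂ : Measure ℝ) [IsProbabilityMeasure μ₁] [IsProbabilityMeasure μ₂]
    (hc₁ : ∃ K : Set ℝ, IsCompact K ∧ μ₁ Kᶜ = 0)
    (hc₂ : ∃ K : Set ℝ, IsCompact K ∧ μ₂ Kᶜ = 0)
    (hd₁ : ∀ x : ℝ, μ₁ ≠ Measure.dirac x) (hd₂ : ∀ x : ℝ, μ₂ ≠ Measure.dirac x)
    (Λ : Set ℝ) (hcount : Λ.Countable) (h0 : (0 : ℝ) ∈ Λ)
    (horth : ∀ lam₁ ∈ Λ, ∀ lam₂ ∈ Λ, lam₁ ≠ lam₂ →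
      (∫ x : ℝ, Complex.exp (2 * Real.pi * Complex.I * ((lam₁ - lam₂) * x)) ∂μ₁) = 0) :
    (∀ lam₁ ∈ Λ, ∀ lam₂ ∈ Λ, lam₁ ≠ lam₂ →
      (∫ x : ℝ, Complex.exp (2 * Real.pi * Complex.I * ((lam₁ - lam₂) * x))
        ∂(μ₁.conv μ₂)) = 0) ∧
    (∃ f : ℝ → ℂ, MemLp f 2 (μ₁.conv μ₂) ∧ ¬ (f =ᵐ[μ₁.conv μ₂] 0) ∧
      ∀ lam ∈ Λ, (∫ x : ℝ, f x *
        (starRingEnd ℂ) (Complex.exp (2 * Real.pi * Complex.I * (lam * x)))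
          ∂(μ₁.conv μ₂)) = 0) :=
  convolution_orthogonal_not_spectrum_general μ₁ μ₂ hd₂ Λ h0 horth
end

section
/- Let N, L ≥ 2 and m ≥ 1 with the prime factorization data: L = L_1^{α_1} ⋯ L_κ^{α_κ}, N = L_{b+1}^{s_{b+1}} ⋯ L_κ^{s_κ} N' with s_i ≥ 1 for i > b and gcd(L_i, N') = 1 for all i, p = NL, m = L_1^{τ_1} ⋯ L_κ^{τ_κ} m' with gcd(L_i, m') = 1. Write τ_i + α_i − 1 = d_i l_i + r_i with 0 ≤ r_i < l_i where l_i = α_i for i ≤ b and l_i = α_i + s_i for i > b, and d = max_i d_i. If N divides m / gcd(m, p^d), then for all i ≤ b one has τ_i − d α_i ≤ 0, and for all i > b one has τ_i − d l_i = s_i. -/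
open Finset

/-- The identities (4.3): with `p = NL`, `L = ∏ L_i^{α_i}`,
`N = (∏_{i>b} L_i^{s_i}) N'`, `m = (∏ L_i^{τ_i}) m'`, `l_i = α_i` for `i ≤ b` and
`l_i = α_i + s_i` for `i > b`, `τ_i + α_i − 1 = d_i l_i + r_i` (`0 ≤ r_i < l_i`) and
`d = max_i d_i`: if `N ∣ m/gcd(m, p^d)`, then `τ_i − d α_i ≤ 0` for `i ≤ b` and
`τ_i − d l_i = s_i` for `i > b`. -/
theorem identities_4_3 (κ b : ℕ) (hκ : 0 < κ) (hb : b ≤ κ)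
    (Lp α τ l s dd r : Fin κ → ℕ) (L m p m' N N' : ℕ)
    (hprime : ∀ i, (Lp i).Prime) (hdist : Function.Injective Lp)
    (hα : ∀ i, 1 ≤ α i)
    (hs : ∀ i : Fin κ, b ≤ (i : ℕ) → 1 ≤ s i)
    (hlle : ∀ i : Fin κ, (i : ℕ) < b → l i = α i)
    (hlgt : ∀ i : Fin κ, b ≤ (i : ℕ) → l i = α i + s i)
    (hL : L = ∏ i, Lp i ^ α i) (hL2 : 2 ≤ L) (hN2 : 2 ≤ N)
    (hm' : 1 ≤ m') (hN' : 1 ≤ N')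
    (hN : N = (∏ i ∈ Finset.univ.filter (fun i : Fin κ => b ≤ (i : ℕ)), Lp i ^ s i) * N')
    (hcopN' : ∀ i, Nat.gcd (Lp i) N' = 1)
    (hm : m = (∏ i, Lp i ^ τ i) * m')
    (hcopm : ∀ i, Nat.gcd (Lp i) m' = 1)
    (hpNL : p = N * L)
    (hdr : ∀ i, τ i + α i - 1 = dd i * l i + r i) (hrlt : ∀ i, r i < l i)
    (hNdvd : N ∣ m / Nat.gcd m (p ^ (Finset.univ.sup dd))) :
    (∀ i : Fin κ, (i : ℕ) < b → τ i ≤ Finset.univ.sup dd * α i) ∧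
    (∀ i : Fin κ, b ≤ (i : ℕ) → τ i = Finset.univ.sup dd * l i + s i) := by
  set d := Finset.univ.sup dd with hd
  have hprod0 : (∏ i, Lp i ^ τ i) ≠ 0 :=
    Finset.prod_ne_zero_iff.mpr fun i _ => pow_ne_zero _ (hprime i).pos.ne'
  have hm0 : m ≠ 0 := by
    rw [hm]; exact Nat.mul_ne_zero hprod0 (by omega)
  -- factorization of m at Lp i is τ i
  have hfac : ∀ i, m.factorization (Lp i) = τ i := by
    intro i
    have hnd : ¬ Lp i ∣ m' := by
      intro h
      have h2 : Lp i ∣ Nat.gcd (Lp i) m' := Nat.dvd_gcd dvd_rfl h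
      rw [hcopm i] at h2
      have h3 := Nat.le_of_dvd one_pos h2
      have h4 := (hprime i).two_le
      omega
    rw [hm, Nat.factorization_mul hprod0 (by omega), Finsupp.add_apply,
      Nat.factorization_eq_zero_of_not_dvd hnd, add_zero,
      Nat.factorization_prod (fun j _ => pow_ne_zero _ (hprime j).pos.ne')]
    rw [Finset.sum_apply']
    rw [Finset.sum_eq_single i]
    · rw [Nat.Prime.factorization_pow (hprime i), Finsupp.single_apply, if_pos rfl]
    · intro j _ hji
      rw [Nat.Prime.factorization_pow (hprime j), Finsupp.single_apply,
        if_neg (fun h => hji (hdist h))]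
    · intro h; exact absurd (Finset.mem_univ i) h
  -- upper bound from division with remainder
  have hub : ∀ i, τ i + α i ≤ dd i * l i + l i := by
    intro i
    have h1 := hdr i; have h2 := hrlt i; have h3 := hα i
    omega
  have hdle : ∀ i : Fin κ, dd i * l i ≤ d * l i := fun i =>
    Nat.mul_le_mul_right _ (Finset.le_sup (Finset.mem_univ i))
  constructor
  · intro i hib
    have h1 := hub i
    have h2 := hlle i hib
    have h3 := hdle i
    rw [h2] at h1 h3
    omega
  · intro i hib
    -- lower bound via valuations
    have hpowN : Lp i ^ s i ∣ N := by
      rw [hN]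
      exact dvd_mul_of_dvd_left
        (Finset.dvd_prod_of_mem _ (Finset.mem_filter.mpr ⟨Finset.mem_univ i, hib⟩)) _
    have hpowL : Lp i ^ α i ∣ L := by
      rw [hL]; exact Finset.dvd_prod_of_mem _ (Finset.mem_univ i)
    have hpowp : Lp i ^ l i ∣ p := by
      rw [hpNL, hlgt i hib, add_comm (α i), pow_add]
      exact mul_dvd_mul hpowN hpowL
    have hpowpd : Lp i ^ (d * l i) ∣ p ^ d := by
      rw [mul_comm, pow_mul]
      exact pow_dvd_pow_of_dvd hpowp d
    have hpowm : Lp i ^ τ i ∣ m := by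
      rw [hm]; exact dvd_mul_of_dvd_left (Finset.dvd_prod_of_mem _ (Finset.mem_univ i)) _
    set t := min (τ i) (d * l i) with ht
    have hgd : Lp i ^ t ∣ Nat.gcd m (p ^ d) :=
      Nat.dvd_gcd ((pow_dvd_pow _ (min_le_left _ _)).trans hpowm)
        ((pow_dvd_pow _ (min_le_right _ _)).trans hpowpd)
    have hsdiv : Lp i ^ s i ∣ m / Nat.gcd m (p ^ d) := hpowN.trans hNdvd
    obtain ⟨c, hc⟩ := hsdiv
    have hmc : m = Lp i ^ s i * Nat.gcd m (p ^ d) * c := by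
      conv_lhs => rw [← Nat.div_mul_cancel (Nat.gcd_dvd_left m (p ^ d))]
      rw [hc]; ring
    have hkey : Lp i ^ (s i + t) ∣ m := by
      rw [pow_add, hmc]
      exact dvd_mul_of_dvd_left (mul_dvd_mul_left _ hgd) _
    have hle : s i + t ≤ τ i := by
      have := (Nat.Prime.pow_dvd_iff_le_factorization (hprime i) hm0).mp hkey
      rwa [hfac i] at this
    have h1 := hub i
    have h2 := hlgt i hib
    have h3 := hdle i
    have h4 := hs i hib
    omega
end

section
/- Let R ∈ ℤ with |R| ≥ 2 and B ⊂ ℤ finite with #B = |R|. If for each k ≥ 1 the set B + RB + R²B + ⋯ + R^{k−1}B contains (#B)^k distinct elements, then the attractor T(R,B) = { ∑_{j≥1} R^{−j} b_j : b_j ∈ B } has positive Lebesgue measure. Conversely, if some sum B + RB + ⋯ + R^{k−1}B has fewer than (#B)^k elements, then T(R,B) has Lebesgue measure zero. -/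
open Finset MeasureTheory

/-- The digit sums `B + RB + ⋯ + R^{k−1}B` as a finset. -/
def digitSums (R : ℤ) (B : Finset ℤ) (k : ℕ) : Finset ℤ :=
  Finset.image (fun f : Fin k → {x // x ∈ B} => ∑ i : Fin k, R ^ (i : ℕ) * ((f i : ℤ)))
    Finset.univ

/-- The attractor `T(R,B) = { ∑_{j≥1} R^{−j} b_j : b_j ∈ B }`. -/
def attractor (R : ℤ) (B : Finset ℤ) : Set ℝ :=
  {x : ℝ | ∃ b : ℕ → ℤ, (∀ j, b j ∈ B) ∧
    x = ∑' j : ℕ, ((R : ℝ)⁻¹) ^ (j + 1) * (b j : ℝ)}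

/-!
If `x ∈ T(R,B)`, truncating its expansion after `n` digits leaves an error of at most
`M |R|^{-n}` (with `M = ∑_{b ∈ B} |b|`), and the truncation is `R^{-n} d` for a digit sum
`d ∈ D_n = B + RB + ⋯ + R^{n-1}B`; conversely every `R^{-n} d` is that close to `T(R,B)`.
Hence `T(R,B)` is covered by `#D_n` intervals of length `2M |R|^{-n}`. The sets `D_n` are
submultiplicative in size, so if `#D_k < |R|^k` then `#D_{mk} |R|^{-mk} → 0` and `T(R,B)` is null.
If instead `#D_n = |R|^n`, the points `R^{-n} d` are `|R|^{-n}`-separated, so disjoint intervals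
of total length `1` lie in the `(M + 1)|R|^{-n}`-neighbourhood of the compact set `T(R,B)`;
letting `n → ∞` gives measure at least `1`.
-/

open Filter Topology Metric
open scoped ENNReal

lemma card_mul_ofReal_le_volume {ι : Type*} {S : Finset ι} {x : ι → ℝ} {r : ℝ} {A : Set ℝ}
    (hsep : (S : Set ι).Pairwise fun i j => r ≤ dist (x i) (x j))
    (hA : ∀ i ∈ S, ball (x i) (r / 2) ⊆ A) : #S * ENNReal.ofReal r ≤ volume A :=
  calc #S * ENNReal.ofReal r = ∑ i ∈ S, volume (ball (x i) (r / 2)) := by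
        simp [Real.volume_ball, mul_div_cancel₀]
    _ = volume (⋃ i ∈ S, ball (x i) (r / 2)) :=
        (measure_biUnion_finset (fun i hi j hj hij => ball_disjoint_ball (by
          linarith [hsep hi hj hij])) fun _ _ => measurableSet_ball).symm
    _ ≤ volume A := measure_mono (Set.iUnion₂_subset hA)

section DigitSums

variable {R : ℤ} {B : Finset ℤ}

lemma sum_mem_digitSums {b : ℕ → ℤ} (hb : ∀ j, b j ∈ B) (n : ℕ) :
    ∑ i ∈ range n, R ^ i * b i ∈ digitSums R B n := by
  rw [digitSums, mem_image]
  exact ⟨fun i => ⟨b i, hb i⟩, mem_univ _, Fin.sum_univ_eq_sum_range (fun i => R ^ i * b i) n⟩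

lemma mem_digitSums_iff (hB : B.Nonempty) {n : ℕ} {d : ℤ} :
    d ∈ digitSums R B n ↔ ∃ b : ℕ → ℤ, (∀ j, b j ∈ B) ∧ d = ∑ i ∈ range n, R ^ i * b i := by
  refine ⟨fun hd => ?_, fun ⟨b, hb, hd⟩ => hd ▸ sum_mem_digitSums hb n⟩
  obtain ⟨f, -, rfl⟩ := mem_image.1 hd
  obtain ⟨b₀, hb₀⟩ := hB
  refine ⟨fun i => if h : i < n then f ⟨i, h⟩ else b₀, fun j => ?_, ?_⟩
  · dsimp only
    split_ifs
    exacts [(f _).2, hb₀]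
  · rw [← Fin.sum_univ_eq_sum_range (fun i => R ^ i * if h : i < n then (f ⟨i, h⟩ : ℤ) else b₀)]
    simp

lemma card_digitSums_zero_le : #(digitSums R B 0) ≤ 1 :=
  card_image_le.trans (by simp)

lemma card_digitSums_add_le (hB : B.Nonempty) (m k : ℕ) :
    #(digitSums R B (m + k)) ≤ #(digitSums R B m) * #(digitSums R B k) := by
  refine (card_le_card fun d hd => ?_).trans (card_image₂_le (fun x y => x + R ^ m * y) _ _)
  obtain ⟨b, hb, rfl⟩ := (mem_digitSums_iff hB).1 hd
  refine mem_image₂.2 ⟨_, sum_mem_digitSums hb m, _,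
    sum_mem_digitSums (b := fun i => b (m + i)) (fun i => hb _) k, ?_⟩
  rw [sum_range_add, mul_sum]
  simp only [pow_add, mul_assoc]

lemma card_digitSums_mul_le (hB : B.Nonempty) (k m : ℕ) :
    #(digitSums R B (m * k)) ≤ #(digitSums R B k) ^ m := by
  induction m with
  | zero => simpa using card_digitSums_zero_le
  | succ m ih =>
    rw [add_mul, one_mul, pow_succ]
    exact (card_digitSums_add_le hB _ _).trans (Nat.mul_le_mul_right _ ih)

end DigitSums

section RadixExpansion

noncomputable def digitBound (B : Finset ℤ) : ℝ := ∑ b ∈ B, |(b : ℝ)|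

lemma digitBound_nonneg (B : Finset ℤ) : 0 ≤ digitBound B :=
  sum_nonneg fun _ _ => abs_nonneg _

lemma abs_le_digitBound {B : Finset ℤ} {b : ℤ} (hb : b ∈ B) : |(b : ℝ)| ≤ digitBound B :=
  single_le_sum (f := fun b : ℤ => |(b : ℝ)|) (fun _ _ => abs_nonneg _) hb

variable {R : ℤ} {B : Finset ℤ}

lemma one_lt_abs_cast (hR : 1 < |R|) : 1 < |(R : ℝ)| := by
  rw [← Int.cast_abs]; exact_mod_cast hR

lemma abs_inv_cast_le_half (hR : 2 ≤ |R|) : |(R : ℝ)|⁻¹ ≤ 2⁻¹ :=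
  inv_anti₀ two_pos (by rw [← Int.cast_abs]; exact_mod_cast hR)

lemma abs_inv_pow_mul_le {b : ℤ} (hb : b ∈ B) (j : ℕ) :
    |((R : ℝ)⁻¹) ^ j * b| ≤ digitBound B * |(R : ℝ)|⁻¹ ^ j := by
  rw [abs_mul, abs_pow, abs_inv, mul_comm]
  exact mul_le_mul_of_nonneg_right (abs_le_digitBound hb) (by positivity)

lemma summable_digitBound_mul_pow_succ (hR : 1 < |R|) (B : Finset ℤ) :
    Summable fun j => digitBound B * |(R : ℝ)|⁻¹ ^ (j + 1) :=
  ((summable_geometric_of_lt_one (by positivity)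
    (inv_lt_one_of_one_lt₀ (one_lt_abs_cast hR))).comp_injective (add_left_injective 1)).mul_left _

lemma summable_inv_pow_succ_mul (hR : 1 < |R|) {b : ℕ → ℤ} (hb : ∀ j, b j ∈ B) :
    Summable fun j => ((R : ℝ)⁻¹) ^ (j + 1) * b j :=
  .of_norm_bounded (summable_digitBound_mul_pow_succ hR B)
    fun j => abs_inv_pow_mul_le (hb j) (j + 1)

lemma dist_sum_range_tsum_le (hR : 2 ≤ |R|) {b : ℕ → ℤ} (hb : ∀ j, b j ∈ B) (n : ℕ) :
    dist (∑ j ∈ range n, ((R : ℝ)⁻¹) ^ (j + 1) * b j) (∑' j, ((R : ℝ)⁻¹) ^ (j + 1) * b j)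
      ≤ digitBound B * |(R : ℝ)|⁻¹ ^ n := by
  set ρ := |(R : ℝ)|⁻¹
  have hρ : ρ ≤ 2⁻¹ := abs_inv_cast_le_half hR
  have hstep (m : ℕ) : dist (∑ j ∈ range m, ((R : ℝ)⁻¹) ^ (j + 1) * b j)
      (∑ j ∈ range (m + 1), ((R : ℝ)⁻¹) ^ (j + 1) * b j) ≤ digitBound B * ρ * ρ ^ m := by
    rw [dist_comm, dist_eq_norm, sum_range_succ_sub_sum, mul_assoc, ← pow_succ']
    exact abs_inv_pow_mul_le (hb m) (m + 1)
  refine (dist_le_of_le_geometric_of_tendsto _ _ (by linarith) hstep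
    ((summable_inv_pow_succ_mul (by linarith) hb).hasSum.tendsto_sum_nat) n).trans ?_
  have : 0 ≤ digitBound B * ρ ^ n := mul_nonneg (digitBound_nonneg B) (by positivity)
  rw [div_le_iff₀ (by linarith)]
  nlinarith

end RadixExpansion

section Attractor

variable {R : ℤ} {B : Finset ℤ}

lemma sum_range_inv_pow_succ_mul (hR : R ≠ 0) (b : ℕ → ℤ) (n : ℕ) :
    ∑ j ∈ range n, ((R : ℝ)⁻¹) ^ (j + 1) * b j
      = ((R : ℝ) ^ n)⁻¹ * ↑(∑ i ∈ range n, R ^ i * b (n - 1 - i)) := by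
  rw [Int.cast_sum, mul_sum]
  conv_rhs => rw [← sum_range_reflect]
  refine sum_congr rfl fun j hj => ?_
  have hj : j < n := mem_range.1 hj
  have hpow : (R : ℝ) ^ n = (R : ℝ) ^ (j + 1) * (R : ℝ) ^ (n - 1 - j) := by
    rw [← pow_add]; congr 1; omega
  have hR' : (R : ℝ) ^ (n - 1 - j) ≠ 0 := pow_ne_zero _ (Int.cast_ne_zero.2 hR)
  rw [show n - 1 - (n - 1 - j) = j by omega, Int.cast_mul, Int.cast_pow, hpow, mul_inv, inv_pow,
    mul_assoc, inv_mul_cancel_left₀ hR']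

lemma exists_mem_digitSums_dist_le (hR : 2 ≤ |R|) {x : ℝ} (hx : x ∈ attractor R B) (n : ℕ) :
    ∃ d ∈ digitSums R B n, dist x (((R : ℝ) ^ n)⁻¹ * d) ≤ digitBound B * |(R : ℝ)|⁻¹ ^ n := by
  obtain ⟨b, hb, rfl⟩ := hx
  refine ⟨_, sum_mem_digitSums (b := fun i => b (n - 1 - i)) (fun i => hb _) n, ?_⟩
  rw [← sum_range_inv_pow_succ_mul (abs_pos.1 (by linarith)), dist_comm]
  exact dist_sum_range_tsum_le hR hb n

lemma exists_mem_attractor_dist_le (hR : 2 ≤ |R|) (hB : B.Nonempty) {n : ℕ} {d : ℤ}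
    (hd : d ∈ digitSums R B n) :
    ∃ x ∈ attractor R B, dist x (((R : ℝ) ^ n)⁻¹ * d) ≤ digitBound B * |(R : ℝ)|⁻¹ ^ n := by
  obtain ⟨b, hb, rfl⟩ := (mem_digitSums_iff hB).1 hd
  -- Reversing the digits; for `j ≥ n` truncated subtraction makes this `b 0`, still in `B`.
  refine ⟨_, ⟨fun j => b (n - 1 - j), fun j => hb _, rfl⟩, ?_⟩
  have hrev : ∑ i ∈ range n, R ^ i * b i = ∑ i ∈ range n, R ^ i * b (n - 1 - (n - 1 - i)) :=
    sum_congr rfl fun i hi => by rw [show n - 1 - (n - 1 - i) = i by grind]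
  have h := dist_sum_range_tsum_le hR (b := fun j => b (n - 1 - j)) (fun j => hb _) n
  rwa [sum_range_inv_pow_succ_mul (abs_pos.1 (by linarith)), ← hrev, dist_comm] at h

lemma isCompact_attractor (hR : 1 < |R|) : IsCompact (attractor R B) := by
  have hrange : attractor R B =
      Set.range fun b : ℕ → B => ∑' j, ((R : ℝ)⁻¹) ^ (j + 1) * ((b j : ℤ) : ℝ) := by
    ext x
    constructor
    · rintro ⟨b, hb, rfl⟩
      exact ⟨fun j => ⟨b j, hb j⟩, rfl⟩
    · rintro ⟨b, rfl⟩
      exact ⟨fun j => b j, fun j => (b j).2, rfl⟩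
  rw [hrange]
  exact isCompact_range (continuous_tsum (fun j => by fun_prop)
    (summable_digitBound_mul_pow_succ hR B) fun j b => abs_inv_pow_mul_le (b j).2 (j + 1))

end Attractor

section Volume

variable {R : ℤ} {B : Finset ℤ}

lemma volume_attractor_le (hR : 2 ≤ |R|) (n : ℕ) :
    volume (attractor R B) ≤
      #(digitSums R B n) * ENNReal.ofReal (2 * (digitBound B * |(R : ℝ)|⁻¹ ^ n)) := by
  have hcover : attractor R B ⊆ ⋃ d ∈ digitSums R B n,
      closedBall (((R : ℝ) ^ n)⁻¹ * d) (digitBound B * |(R : ℝ)|⁻¹ ^ n) := fun x hx => by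
    obtain ⟨d, hd, hdist⟩ := exists_mem_digitSums_dist_le hR hx n
    exact Set.mem_biUnion hd hdist
  calc volume (attractor R B)
      ≤ ∑ d ∈ digitSums R B n,
          volume (closedBall (((R : ℝ) ^ n)⁻¹ * d) (digitBound B * |(R : ℝ)|⁻¹ ^ n)) :=
        (measure_mono hcover).trans (measure_biUnion_finset_le _ _)
    _ = _ := by simp [Real.volume_closedBall]

lemma volume_attractor_eq_zero (hR : 2 ≤ |R|) (hB : B.Nonempty) {k : ℕ}
    (hk : #(digitSums R B k) < R.natAbs ^ k) : volume (attractor R B) = 0 := by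
  set ρ := |(R : ℝ)|⁻¹ with hρ
  set q := (#(digitSums R B k) : ℝ) * ρ ^ k with hq_def
  have hq : q < 1 := by
    have hlt : (#(digitSums R B k) : ℝ) < |(R : ℝ)| ^ k := by
      rw [← Int.cast_abs, ← Nat.cast_natAbs]; exact_mod_cast hk
    rwa [hq_def, hρ, inv_pow, ← div_eq_mul_inv, div_lt_one (hlt.trans_le' (Nat.cast_nonneg _))]
  have hbound (m : ℕ) : volume (attractor R B) ≤ ENNReal.ofReal (2 * digitBound B * q ^ m) := by
    refine (volume_attractor_le hR (m * k)).trans ?_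
    have hcard : (#(digitSums R B (m * k)) : ℝ) ≤ #(digitSums R B k) ^ m := by
      exact_mod_cast card_digitSums_mul_le hB k m
    rw [← ENNReal.ofReal_natCast, ← ENNReal.ofReal_mul (by positivity)]
    refine ENNReal.ofReal_le_ofReal ?_
    calc (#(digitSums R B (m * k)) : ℝ) * (2 * (digitBound B * ρ ^ (m * k)))
        ≤ #(digitSums R B k) ^ m * (2 * (digitBound B * ρ ^ (m * k))) :=
          mul_le_mul_of_nonneg_right hcard (by have := digitBound_nonneg B; positivity)
      _ = 2 * digitBound B * q ^ m := by rw [mul_pow, mul_comm m k, pow_mul]; ring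
  have hlim : Tendsto (fun m => ENNReal.ofReal (2 * digitBound B * q ^ m)) atTop (𝓝 0) := by
    simpa using ENNReal.tendsto_ofReal
      ((tendsto_pow_atTop_nhds_zero_of_lt_one (by positivity) hq).const_mul (2 * digitBound B))
  exact le_zero_iff.1 (ge_of_tendsto' hlim hbound)

lemma one_le_volume_cthickening_attractor (hR : 2 ≤ |R|) (hB : B.Nonempty) {n : ℕ}
    (hn : #(digitSums R B n) = R.natAbs ^ n) :
    1 ≤ volume (cthickening ((digitBound B + 1) * |(R : ℝ)|⁻¹ ^ n) (attractor R B)) := by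
  set ρ := |(R : ℝ)|⁻¹
  have hR0 : (R : ℝ) ≠ 0 := Int.cast_ne_zero.2 (abs_pos.1 (by linarith))
  have hsep : (digitSums R B n : Set ℤ).Pairwise
      fun d e => ρ ^ n ≤ dist (((R : ℝ) ^ n)⁻¹ * d) (((R : ℝ) ^ n)⁻¹ * e) := by
    intro d _ e _ hde
    rw [Real.dist_eq, ← mul_sub, abs_mul, abs_inv, abs_pow, inv_pow, ← Real.dist_eq,
      Int.dist_cast_real]
    exact le_mul_of_one_le_right (by positivity) (Int.pairwise_one_le_dist hde)
  have hball : ∀ d ∈ digitSums R B n, ball (((R : ℝ) ^ n)⁻¹ * d) (ρ ^ n / 2) ⊆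
      cthickening ((digitBound B + 1) * ρ ^ n) (attractor R B) := by
    intro d hd
    obtain ⟨x, hx, hdist⟩ := exists_mem_attractor_dist_le hR hB hd
    refine (ball_subset_ball' ?_).trans
      ((ball_subset_thickening hx _).trans (thickening_subset_cthickening _ _))
    rw [dist_comm]
    linarith [pow_nonneg (inv_nonneg.2 (abs_nonneg (R : ℝ))) n]
  have hvol : (#(digitSums R B n) : ℝ≥0∞) * ENNReal.ofReal (ρ ^ n) = 1 := by
    rw [hn, ← ENNReal.ofReal_natCast, ← ENNReal.ofReal_mul (by positivity), Nat.cast_pow,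
      Nat.cast_natAbs, Int.cast_abs, ← mul_pow, mul_inv_cancel₀ (abs_ne_zero.2 hR0), one_pow,
      ENNReal.ofReal_one]
  exact hvol.symm.le.trans (card_mul_ofReal_le_volume hsep hball)

lemma one_le_volume_attractor (hR : 2 ≤ |R|) (hB : B.Nonempty)
    (h : ∀ n, 1 ≤ n → #(digitSums R B n) = R.natAbs ^ n) : 1 ≤ volume (attractor R B) := by
  have hρ : Tendsto (fun n => (digitBound B + 1) * |(R : ℝ)|⁻¹ ^ n) atTop (𝓝 0) := by
    simpa using (tendsto_pow_atTop_nhds_zero_of_lt_one (by positivity)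
      (inv_lt_one_of_one_lt₀ (one_lt_abs_cast (by linarith)))).const_mul (digitBound B + 1)
  exact ge_of_tendsto ((tendsto_measure_cthickening_of_isCompact
    (isCompact_attractor (by linarith))).comp hρ) ((eventually_ge_atTop 1).mono
      fun n hn => one_le_volume_cthickening_attractor hR hB (h n hn))

end Volume

/-- Kenyon–Lagarias–Wang criterion (i) ⟺ (ii) in dimension one: for `|R| ≥ 2` and
`#B = |R|`, the attractor `T(R,B)` has positive Lebesgue measure iff every digit sum
`B + RB + ⋯ + R^{k−1}B` has `(#B)^k` distinct elements; if some digit sum has fewer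
elements, then `T(R,B)` is Lebesgue-null. -/
theorem klw_criterion (R : ℤ) (hR : 2 ≤ |R|) (B : Finset ℤ) (hcard : B.card = R.natAbs) :
    ((∀ k : ℕ, 1 ≤ k → (digitSums R B k).card = B.card ^ k) →
      0 < volume (attractor R B)) ∧
    ((∃ k : ℕ, 1 ≤ k ∧ (digitSums R B k).card < B.card ^ k) →
      volume (attractor R B) = 0) := by
  have hB : B.Nonempty := by
    rw [← card_pos, hcard, Int.natAbs_pos]
    exact abs_pos.1 (by linarith)
  refine ⟨fun h => ?_, fun ⟨k, _, hk⟩ => ?_⟩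
  · exact one_pos.trans_le (one_le_volume_attractor hR hB fun n hn => hcard ▸ h n hn)
  · exact volume_attractor_eq_zero hR hB (hcard ▸ hk)
end
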